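/- If v ∈ L²(𝕋^d) satisfies v(ξ) = ∫_{ℝ^d} a(ξ−η) v(η) dη for almost every ξ (with v extended ℤ^d-periodically), then v is constant almost everywhere. Equivalently, 0 is a simple eigenvalue of the operator B on L²(𝕋^d) defined by (Bv)(ξ) = v(ξ) − ∫_{ℝ^d} a(ξ−η) v(η) dη. -/

import Mathlib

/-!
Put `D(ξ) = ∫ a(z) (v(ξ - z) - v(ξ))² dz`. Since `a` is a probability density and
`v(ξ) = ∫ a(z) v(ξ - z) dz`, the variance identity gives `D(ξ) + v(ξ)² = ∫ a(z) v(ξ - z)² dz`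
for a.e. `ξ`. By periodicity the right-hand side has the same integral over the cube as `v²`, so
`D = 0` a.e.: for a.e. `z` with `a(z) ≠ 0`, `z` is an a.e. period of `v`. The a.e. periods form a
subgroup of `ℝ^d` containing a set of positive measure, which is open by Steinhaus' theorem, hence
all of `ℝ^d`; and a function with every translation as an a.e. period is a.e. constant.
-/

open MeasureTheory

noncomputable section

/-- The periodicity cell `[0,1)^d`, identified with the torus `𝕋^d`. -/
def cube (d : ℕ) : Set (Fin d → ℝ) := Set.univ.pi fun _ => Set.Ico (0 : ℝ) 1

open Filter Topology
open scoped ENNReal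

section AEPeriods

variable {E β : Type*} [AddCommGroup E] [MeasurableSpace E]

def aePeriods [MeasurableAdd E] (μ : Measure E) [μ.IsAddLeftInvariant] (v : E → β) :
    AddSubgroup E where
  carrier := {z | ∀ᵐ x ∂μ, v (x + z) = v x}
  zero_mem' := ae_of_all _ fun x => by rw [add_zero]
  add_mem' {y z} (hy : ∀ᵐ x ∂μ, v (x + y) = v x) (hz : ∀ᵐ x ∂μ, v (x + z) = v x) := by
    change ∀ᵐ x ∂μ, v (x + (y + z)) = v x
    filter_upwards [(measurePreserving_add_right μ z).quasiMeasurePreserving.ae hy, hz]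
      with x hxy hxz
    rw [← add_assoc, add_right_comm, hxy, hxz]
  neg_mem' {y} (hy : ∀ᵐ x ∂μ, v (x + y) = v x) := by
    change ∀ᵐ x ∂μ, v (x + -y) = v x
    filter_upwards [(measurePreserving_add_right μ (-y)).quasiMeasurePreserving.ae hy] with x hx
    rw [neg_add_cancel_right] at hx
    exact hx.symm

theorem mem_aePeriods [MeasurableAdd E] {μ : Measure E} [μ.IsAddLeftInvariant] {v : E → β} {z : E} :
    z ∈ aePeriods μ v ↔ ∀ᵐ x ∂μ, v (x + z) = v x := Iff.rfl

theorem exists_ae_eq_const_of_aePeriods_eq_top [MeasurableSpace β] [MeasurableEq β]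
    [MeasurableAdd₂ E] {μ : Measure E} [μ.IsAddLeftInvariant] [SFinite μ] [NeZero μ] {v : E → β}
    (hv : Measurable v) (htop : aePeriods μ v = ⊤) : ∃ c, ∀ᵐ x ∂μ, v x = c := by
  have hall : ∀ᵐ x ∂μ, ∀ᵐ z ∂μ, v (x + z) = v x := by
    rw [Measure.ae_ae_comm (p := fun x z => v (x + z) = v x)
      (measurableSet_eq_fun (hv.comp measurable_add) (hv.comp measurable_fst))]
    exact .of_forall fun z => mem_aePeriods.mp (htop ▸ AddSubgroup.mem_top z)
  obtain ⟨x₀, hx₀⟩ := hall.exists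
  refine ⟨v x₀, ?_⟩
  filter_upwards [(measurePreserving_add_left μ (-x₀)).quasiMeasurePreserving.ae hx₀] with x hx
  rwa [add_neg_cancel_left] at hx

end AEPeriods

theorem AddSubgroup.eq_top_of_mem_nhds_zero {E : Type*} [AddGroup E] [TopologicalSpace E]
    [IsTopologicalAddGroup E] [ConnectedSpace E] (H : AddSubgroup E) (hH : (H : Set E) ∈ 𝓝 0) :
    H = ⊤ := by
  have hopen := H.isOpen_of_mem_nhds hH
  exact AddSubgroup.coe_eq_univ.mp
    (IsClopen.eq_univ ⟨H.isClosed_of_isOpen hopen, hopen⟩ ⟨0, H.zero_mem⟩)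

theorem AddSubgroup.eq_top_of_ae_mem {E : Type*} [AddGroup E] [TopologicalSpace E]
    [IsTopologicalAddGroup E] [ConnectedSpace E] [LocallyCompactSpace E] [MeasurableSpace E]
    [BorelSpace E] (μ : Measure E) [μ.IsAddHaarMeasure] [μ.InnerRegular] (H : AddSubgroup E)
    {S : Set E} (hS : MeasurableSet S) (hSpos : 0 < μ S) (hSH : ∀ᵐ z ∂μ, z ∈ S → z ∈ H) :
    H = ⊤ := by
  set N := toMeasurable μ {z | ¬(z ∈ S → z ∈ H)}
  have hN : μ N = 0 := by rw [measure_toMeasurable]; exact ae_iff.mp hSH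
  have hSN : S \ N ⊆ H := fun z hz => by
    by_contra hzH
    exact hz.2 (subset_toMeasurable _ _ fun h => hzH (h hz.1))
  refine H.eq_top_of_mem_nhds_zero (mem_of_superset
    (Measure.sub_mem_nhds_zero_of_addHaar_pos μ (S \ N) (hS.diff (measurableSet_toMeasurable _ _))
      (by rwa [measure_sdiff_null hN])) ?_)
  rintro _ ⟨x, hx, y, hy, rfl⟩
  exact H.sub_mem (hSN hx) (hSN hy)

theorem lintegral_ofReal_mul_sub_sq_add_sq {α : Type*} [MeasurableSpace α] {μ : Measure α}
    {w f : α → ℝ} {c : ℝ} (hw : ∀ x, 0 ≤ w x) (hwi : Integrable w μ) (hw1 : ∫ x, w x ∂μ = 1)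
    (hf : AEStronglyMeasurable f μ) (hwf : ∫ x, w x * f x ∂μ = c)
    (hwf2 : ∫⁻ x, ENNReal.ofReal (w x * f x ^ 2) ∂μ ≠ ∞) :
    ∫⁻ x, ENNReal.ofReal (w x * (f x - c) ^ 2) ∂μ + ENNReal.ofReal (c ^ 2)
      = ∫⁻ x, ENNReal.ofReal (w x * f x ^ 2) ∂μ := by
  have hwf2_nonneg : 0 ≤ᵐ[μ] fun x => w x * f x ^ 2 :=
    ae_of_all _ fun x => mul_nonneg (hw x) (sq_nonneg _)
  have hwf2i : Integrable (fun x => w x * f x ^ 2) μ :=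
    ⟨hwi.1.mul (hf.pow 2), (hasFiniteIntegral_iff_ofReal hwf2_nonneg).mpr hwf2.lt_top⟩
  have hwfi : Integrable (fun x => w x * f x) μ := by
    refine (hwi.add hwf2i).mono' (hwi.1.mul hf) (ae_of_all _ fun x => ?_)
    have habs : |f x| ≤ 1 + f x ^ 2 := by nlinarith [sq_abs (f x), abs_nonneg (f x)]
    calc ‖w x * f x‖ = w x * |f x| := by
          rw [norm_mul, Real.norm_of_nonneg (hw x), Real.norm_eq_abs]
      _ ≤ w x * (1 + f x ^ 2) := mul_le_mul_of_nonneg_left habs (hw x)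
      _ = w x + w x * f x ^ 2 := by ring
  have hsplit : (fun x => w x * (f x - c) ^ 2)
      = fun x => (w x * f x ^ 2 - 2 * c * (w x * f x)) + c ^ 2 * w x := by
    funext x; ring
  have hmid : Integrable (fun x => w x * f x ^ 2 - 2 * c * (w x * f x)) μ :=
    hwf2i.sub (hwfi.const_mul _)
  have hsubi : Integrable (fun x => w x * (f x - c) ^ 2) μ :=
    hsplit ▸ hmid.add (hwi.const_mul _)
  have hexpand : ∫ x, w x * (f x - c) ^ 2 ∂μ = ∫ x, w x * f x ^ 2 ∂μ - c ^ 2 := by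
    rw [hsplit, integral_add hmid (hwi.const_mul _), integral_sub hwf2i (hwfi.const_mul _),
      integral_const_mul, integral_const_mul, hwf, hw1]
    ring
  have hvar_nonneg : 0 ≤ ∫ x, w x * f x ^ 2 ∂μ - c ^ 2 :=
    hexpand ▸ integral_nonneg fun x => mul_nonneg (hw x) (sq_nonneg _)
  rw [← ofReal_integral_eq_lintegral_ofReal hsubi
      (ae_of_all _ fun x => mul_nonneg (hw x) (sq_nonneg _)),
    ← ofReal_integral_eq_lintegral_ofReal hwf2i hwf2_nonneg, hexpand,
    ← ENNReal.ofReal_add hvar_nonneg (sq_nonneg c), sub_add_cancel]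

namespace MeasureTheory.IsAddFundamentalDomain

variable {E : Type*} [AddCommGroup E] [MeasurableSpace E] {μ : Measure E}
  {G : AddSubgroup E} [Countable G] {s : Set E} [MeasurableAdd₂ E] [μ.IsAddLeftInvariant]

theorem ae_of_ae_restrict (hs : IsAddFundamentalDomain G s μ) {p : E → Prop}
    (hp : MeasurableSet {x | p x}) (hinv : ∀ g : G, ∀ x, p (g + x) ↔ p x)
    (h : ∀ᵐ x ∂μ.restrict s, p x) : ∀ᵐ x ∂μ, p x := by
  refine hs.measure_zero_of_invariant _ (fun g => ?_) ?_
  · ext x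
    simp only [Set.mem_vadd_set_iff_neg_vadd_mem, Set.mem_compl_iff, Set.mem_ofPred_eq]
    exact (hinv (-g) x).not
  · rwa [ae_iff, ← Set.compl_ofPred, Measure.restrict_apply hp.compl] at h

theorem setLIntegral_comp_sub_eq (hs : IsAddFundamentalDomain G s μ) {F : E → ℝ≥0∞}
    (hF : ∀ g : G, ∀ x, F (g + x) = F x) (z : E) :
    ∫⁻ x in s, F (x - z) ∂μ = ∫⁻ x in s, F x ∂μ := by
  have hshift : MeasurePreserving (· + z) μ μ := measurePreserving_add_right μ z
  have hs' : IsAddFundamentalDomain G ((· + z) ⁻¹' s) μ :=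
    hs.preimage_of_equiv hshift.quasiMeasurePreserving Function.bijective_id
      fun g x => add_assoc (g : E) x z
  rw [← hshift.setLIntegral_comp_preimage_emb (measurableEmbedding_addRight z)]
  simp only [add_sub_cancel_right]
  exact hs'.setLIntegral_eq hs F hF

variable [MeasurableNeg E] [SFinite μ] {a v : E → ℝ}

theorem setLIntegral_lintegral_mul_comp_sub (hs : IsAddFundamentalDomain G s μ)
    {k F : E → ℝ≥0∞} (hk : Measurable k) (hFm : Measurable F)
    (hF : ∀ g : G, ∀ x, F (g + x) = F x) :
    ∫⁻ x in s, ∫⁻ z, k z * F (x - z) ∂μ ∂μ = (∫⁻ z, k z ∂μ) * ∫⁻ x in s, F x ∂μ := by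
  rw [lintegral_lintegral_swap ((hk.comp measurable_snd).mul
      (hFm.comp (measurable_fst.sub measurable_snd))).aemeasurable,
    ← lintegral_mul_const _ hk]
  refine lintegral_congr fun z => ?_
  rw [lintegral_const_mul _ (by fun_prop), hs.setLIntegral_comp_sub_eq hF]

theorem setLIntegral_lintegral_ofReal_mul_sq_comp_sub
    (hs : IsAddFundamentalDomain G s μ) (ha_meas : Measurable a) (ha_nonneg : ∀ z, 0 ≤ a z)
    (ha_mass : ∫⁻ z, ENNReal.ofReal (a z) ∂μ = 1) (hv_meas : Measurable v)
    (hv_inv : ∀ g : G, ∀ x, v (g + x) = v x) :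
    ∫⁻ ξ in s, ∫⁻ z, ENNReal.ofReal (a z * v (ξ - z) ^ 2) ∂μ ∂μ
      = ∫⁻ ξ in s, ENNReal.ofReal (v ξ ^ 2) ∂μ := by
  simp only [ENNReal.ofReal_mul (ha_nonneg _)]
  rw [hs.setLIntegral_lintegral_mul_comp_sub (k := fun z => ENNReal.ofReal (a z))
    (F := fun x => ENNReal.ofReal (v x ^ 2)) (by fun_prop) (by fun_prop)
    (fun g x => by rw [hv_inv]), ha_mass, one_mul]

theorem ae_lintegral_ofReal_mul_sq_comp_sub_lt_top
    (hs : IsAddFundamentalDomain G s μ) (ha_meas : Measurable a) (ha_nonneg : ∀ z, 0 ≤ a z)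
    (ha_mass : ∫⁻ z, ENNReal.ofReal (a z) ∂μ = 1) (hv_meas : Measurable v)
    (hv_inv : ∀ g : G, ∀ x, v (g + x) = v x)
    (hv_sq : ∫⁻ ξ in s, ENNReal.ofReal (v ξ ^ 2) ∂μ ≠ ∞) :
    ∀ᵐ ξ ∂μ, ∫⁻ z, ENNReal.ofReal (a z * v (ξ - z) ^ 2) ∂μ < ∞ := by
  refine hs.ae_of_ae_restrict (measurableSet_lt (by fun_prop) measurable_const)
    (fun g ξ => by simp only [add_sub_assoc, hv_inv]) (ae_lt_top (by fun_prop) ?_)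
  rwa [hs.setLIntegral_lintegral_ofReal_mul_sq_comp_sub ha_meas ha_nonneg ha_mass hv_meas hv_inv]

theorem ae_lintegral_ofReal_mul_sub_sq_eq_zero [μ.IsNegInvariant]
    (hs : IsAddFundamentalDomain G s μ) (ha_meas : Measurable a) (ha_nonneg : ∀ z, 0 ≤ a z)
    (ha_int : Integrable a μ) (ha_mass : ∫ z, a z ∂μ = 1) (hv_meas : Measurable v)
    (hv_inv : ∀ g : G, ∀ x, v (g + x) = v x)
    (hv_sq : ∫⁻ ξ in s, ENNReal.ofReal (v ξ ^ 2) ∂μ ≠ ∞)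
    (heig : ∀ᵐ ξ ∂μ, v ξ = ∫ η, a (ξ - η) * v η ∂μ) :
    ∀ᵐ ξ ∂μ, ∫⁻ z, ENNReal.ofReal (a z * (v (ξ - z) - v ξ) ^ 2) ∂μ = 0 := by
  have ha_lmass : ∫⁻ z, ENNReal.ofReal (a z) ∂μ = 1 := by
    rw [← ofReal_integral_eq_lintegral_ofReal ha_int (ae_of_all _ ha_nonneg), ha_mass,
      ENNReal.ofReal_one]
  have hvar : ∀ᵐ ξ ∂μ, ∫⁻ z, ENNReal.ofReal (a z * (v (ξ - z) - v ξ) ^ 2) ∂μ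
      + ENNReal.ofReal (v ξ ^ 2) = ∫⁻ z, ENNReal.ofReal (a z * v (ξ - z) ^ 2) ∂μ := by
    filter_upwards [heig, hs.ae_lintegral_ofReal_mul_sq_comp_sub_lt_top ha_meas ha_nonneg
      ha_lmass hv_meas hv_inv hv_sq] with ξ hξ hfin
    refine lintegral_ofReal_mul_sub_sq_add_sq ha_nonneg ha_int ha_mass
      (hv_meas.comp (measurable_const.sub measurable_id)).aestronglyMeasurable ?_ hfin.ne
    rw [hξ, ← integral_sub_left_eq_self _ μ ξ]
    simp only [sub_sub_cancel]
  have hzero : ∫⁻ ξ in s, ∫⁻ z, ENNReal.ofReal (a z * (v (ξ - z) - v ξ) ^ 2) ∂μ ∂μ = 0 := by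
    refine (ENNReal.add_left_inj hv_sq).mp ?_
    rw [zero_add, ← lintegral_add_right _ (by fun_prop),
      ← hs.setLIntegral_lintegral_ofReal_mul_sq_comp_sub ha_meas ha_nonneg ha_lmass hv_meas hv_inv]
    exact lintegral_congr_ae (ae_restrict_of_ae hvar)
  refine hs.ae_of_ae_restrict (measurableSet_eq_fun (by fun_prop) measurable_const)
    (fun g ξ => by simp only [add_sub_assoc, hv_inv]) ?_
  exact (lintegral_eq_zero_iff (by fun_prop)).mp hzero

theorem ae_mem_aePeriods_of_ne_zero [μ.IsNegInvariant] (hs : IsAddFundamentalDomain G s μ)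
    (ha_meas : Measurable a) (ha_nonneg : ∀ z, 0 ≤ a z) (ha_int : Integrable a μ)
    (ha_mass : ∫ z, a z ∂μ = 1) (hv_meas : Measurable v) (hv_inv : ∀ g : G, ∀ x, v (g + x) = v x)
    (hv_sq : IntegrableOn (fun x => v x ^ 2) s μ)
    (heig : ∀ᵐ ξ ∂μ, v ξ = ∫ η, a (ξ - η) * v η ∂μ) :
    ∀ᵐ z ∂μ, a z ≠ 0 → z ∈ aePeriods μ v := by
  have hv_sq_fin : ∫⁻ ξ in s, ENNReal.ofReal (v ξ ^ 2) ∂μ ≠ ∞ :=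
    ((hasFiniteIntegral_iff_ofReal (ae_of_all _ fun x => sq_nonneg (v x))).mp hv_sq.2).ne
  have hlocal : ∀ᵐ ξ ∂μ, ∀ᵐ z ∂μ, a z = 0 ∨ v (ξ - z) = v ξ := by
    filter_upwards [hs.ae_lintegral_ofReal_mul_sub_sq_eq_zero ha_meas ha_nonneg ha_int ha_mass
      hv_meas hv_inv hv_sq_fin heig] with ξ hξ
    filter_upwards [(lintegral_eq_zero_iff (by fun_prop)).mp hξ] with z hz
    have hzero : a z * (v (ξ - z) - v ξ) ^ 2 = 0 :=
      le_antisymm (ENNReal.ofReal_eq_zero.mp hz) (mul_nonneg (ha_nonneg z) (sq_nonneg _))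
    simpa [sub_eq_zero] using hzero
  rw [Measure.ae_ae_comm (p := fun ξ z => a z = 0 ∨ v (ξ - z) = v ξ)
    ((measurableSet_eq_fun (ha_meas.comp measurable_snd) measurable_const).union
      (measurableSet_eq_fun (hv_meas.comp (measurable_fst.sub measurable_snd))
        (hv_meas.comp measurable_fst)))] at hlocal
  filter_upwards [hlocal] with z hz haz
  refine neg_mem_iff.mp (hz.mono fun ξ hξ => ?_)
  rw [← sub_eq_add_neg]
  exact hξ.resolve_left haz

end MeasureTheory.IsAddFundamentalDomain

instance (d : ℕ) :
    Countable (Submodule.span ℤ (Set.range (Pi.basisFun ℝ (Fin d)))).toAddSubgroup :=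
  inferInstanceAs (Countable (Submodule.span ℤ (Set.range (Pi.basisFun ℝ (Fin d)))))

theorem isAddFundamentalDomain_cube (d : ℕ) :
    IsAddFundamentalDomain (Submodule.span ℤ (Set.range (Pi.basisFun ℝ (Fin d)))).toAddSubgroup
      (cube d) volume := by
  rw [cube, ← ZSpan.fundamentalDomain_pi_basisFun]
  exact ZSpan.isAddFundamentalDomain' (Pi.basisFun ℝ (Fin d)) volume

theorem exists_intCast_eq_of_mem_span_basisFun {ι : Type*} [Finite ι] {x : ι → ℝ}
    (hx : x ∈ Submodule.span ℤ (Set.range (Pi.basisFun ℝ ι))) :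
    ∃ k : ι → ℤ, x = fun i => (k i : ℝ) := by
  choose k hk using ((Pi.basisFun ℝ ι).mem_span_iff_repr_mem ℤ x).mp hx
  exact ⟨k, funext fun i => (hk i).symm⟩

theorem stmt5_general {d : ℕ}
    (a : (Fin d → ℝ) → ℝ) (hameas : Measurable a) (haint : Integrable a)
    (hanonneg : ∀ z, 0 ≤ a z) (hamass : ∫ z, a z = 1)
    (v : (Fin d → ℝ) → ℝ) (hvmeas : Measurable v)
    (hvper : ∀ ξ, ∀ k : Fin d → ℤ, v (ξ + fun i => (k i : ℝ)) = v ξ)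
    (hvL2 : IntegrableOn (fun ξ => (v ξ) ^ 2) (cube d))
    (heig : ∀ᵐ ξ ∂(volume : Measure (Fin d → ℝ)), v ξ = ∫ η, a (ξ - η) * v η) :
    ∃ c : ℝ, ∀ᵐ ξ ∂(volume : Measure (Fin d → ℝ)), v ξ = c := by
  have hv_inv : ∀ g : (Submodule.span ℤ (Set.range (Pi.basisFun ℝ (Fin d)))).toAddSubgroup,
      ∀ x, v (g + x) = v x := by
    intro g x
    obtain ⟨k, hk⟩ := exists_intCast_eq_of_mem_span_basisFun g.2
    rw [hk, add_comm]
    exact hvper x k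
  have hsupp := (isAddFundamentalDomain_cube d).ae_mem_aePeriods_of_ne_zero hameas hanonneg haint
    hamass hvmeas hv_inv hvL2 heig
  have hpos : 0 < volume {z | a z ≠ 0} := pos_iff_ne_zero.mpr
    (frequently_ae_iff.mp (frequently_ae_ne_zero_of_integral_ne_zero (hamass ▸ one_ne_zero)))
  exact exists_ae_eq_const_of_aePeriods_eq_top hvmeas ((aePeriods volume v).eq_top_of_ae_mem
    volume (measurableSet_eq_fun hameas measurable_const).compl hpos hsupp)

/-- If `v ∈ L²(𝕋^d)` satisfies `v(ξ) = ∫_{ℝ^d} a(ξ-η) v(η) dη` for a.e. `ξ` (with `v`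
extended `ℤ^d`-periodically), then `v` is constant almost everywhere; i.e. `0` is a
simple eigenvalue of `B v = v - a * v` on `L²(𝕋^d)`. -/
theorem stmt5 {d : ℕ} (hd : 1 ≤ d)
    (a : (Fin d → ℝ) → ℝ) (hameas : Measurable a) (haint : Integrable a)
    (hanonneg : ∀ z, 0 ≤ a z) (hamass : ∫ z, a z = 1)
    (hasymm : ∀ z, a (-z) = a z)
    (v : (Fin d → ℝ) → ℝ) (hvmeas : Measurable v)
    (hvper : ∀ ξ, ∀ k : Fin d → ℤ, v (ξ + fun i => (k i : ℝ)) = v ξ)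
    (hvL2 : IntegrableOn (fun ξ => (v ξ) ^ 2) (cube d))
    (heig : ∀ᵐ ξ ∂(volume : Measure (Fin d → ℝ)), v ξ = ∫ η, a (ξ - η) * v η) :
    ∃ c : ℝ, ∀ᵐ ξ ∂(volume : Measure (Fin d → ℝ)), v ξ = c :=
  stmt5_general a hameas haint hanonneg hamass v hvmeas hvper hvL2 heig
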